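/- arXiv:2508.08436 — 2 statements merged into one kernel-verified Lean document; each statement's English description precedes it below -/
import Mathlib

section
/- Let P*_T = Q_T and, for t = T−1 down to 0, P*_t = Q_t + Aᵀ P*_{t+1} A − Aᵀ P*_{t+1} B (Bᵀ P*_{t+1} B + R_t)^{-1} Bᵀ P*_{t+1} A. If every Q_t and every R_t is symmetric positive definite, then the inverse (Bᵀ P*_{t+1} B + R_t)^{-1} exists at every step and every matrix P*_t (t = 0,…,T) is symmetric positive definite. -/
open MeasureTheory ProbabilityTheory Matrix Filter Finset
open scoped Kronecker ENNReal NNReal Topology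

noncomputable section

/-- Matrices carry the product measurable structure. -/
instance matrixMeasurableSpace {m n α : Type*} [MeasurableSpace α] :
    MeasurableSpace (Matrix m n α) :=
  MeasurableSpace.pi

attribute [local instance] Matrix.normedAddCommGroup Matrix.normedSpace

/-- Column-stacking vectorization of a `p × d` matrix, indexed by `Fin d × Fin p`. -/
def vecM {p d : ℕ} (M : Matrix (Fin p) (Fin d) ℝ) : Fin d × Fin p → ℝ :=
  fun k => M k.2 k.1

/-- Closed-loop state trajectory under the linear feedback policy `u_t = -K_t x_t`:
`x_0 = x0`, `x_{t+1} = A x_t + B u_t + ω_t = (A - B K_t) x_t + ω_t`. -/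
def traj {d p : ℕ} (A : Matrix (Fin d) (Fin d) ℝ) (B : Matrix (Fin d) (Fin p) ℝ)
    (K : ℕ → Matrix (Fin p) (Fin d) ℝ) (x0 : Fin d → ℝ) (ω : ℕ → Fin d → ℝ) :
    ℕ → Fin d → ℝ
  | 0 => x0
  | t + 1 => (A - B * K t).mulVec (traj A B K x0 ω t) + ω t

/-- Single-trajectory cost `Σ_{t<T} (x_tᵀ Q_t x_t + u_tᵀ R_t u_t) + x_Tᵀ Q_T x_T`
under `u_t = -K_t x_t`. -/
def trajCost {d p : ℕ} (T : ℕ) (A : Matrix (Fin d) (Fin d) ℝ) (B : Matrix (Fin d) (Fin p) ℝ)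
    (Q : ℕ → Matrix (Fin d) (Fin d) ℝ) (R : ℕ → Matrix (Fin p) (Fin p) ℝ)
    (K : ℕ → Matrix (Fin p) (Fin d) ℝ) (x0 : Fin d → ℝ) (ω : ℕ → Fin d → ℝ) : ℝ :=
  (∑ t ∈ Finset.range T,
      (traj A B K x0 ω t ⬝ᵥ (Q t).mulVec (traj A B K x0 ω t)
        + (K t).mulVec (traj A B K x0 ω t) ⬝ᵥ (R t).mulVec ((K t).mulVec (traj A B K x0 ω t))))
    + traj A B K x0 ω T ⬝ᵥ (Q T).mulVec (traj A B K x0 ω T)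

/-- Expected cost `C(K)` of the linear policy `K`. -/
def expCost {Ω : Type*} [MeasurableSpace Ω] (μ : Measure Ω) {d p : ℕ} (T : ℕ)
    (A : Matrix (Fin d) (Fin d) ℝ) (B : Matrix (Fin d) (Fin p) ℝ)
    (Q : ℕ → Matrix (Fin d) (Fin d) ℝ) (R : ℕ → Matrix (Fin p) (Fin p) ℝ)
    (x0 : Ω → Fin d → ℝ) (ω : ℕ → Ω → Fin d → ℝ)
    (K : ℕ → Matrix (Fin p) (Fin d) ℝ) : ℝ :=
  ∫ a, trajCost T A B Q R K (x0 a) (fun t => ω t a) ∂μ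

/-- Auxiliary backward Riccati recursion, `riccatiAux k = P*_{T-k}`. -/
def riccatiAux {d p : ℕ} (A : Matrix (Fin d) (Fin d) ℝ) (B : Matrix (Fin d) (Fin p) ℝ)
    (Q : ℕ → Matrix (Fin d) (Fin d) ℝ) (R : ℕ → Matrix (Fin p) (Fin p) ℝ) (T : ℕ) :
    ℕ → Matrix (Fin d) (Fin d) ℝ
  | 0 => Q T
  | k + 1 =>
      Q (T - (k + 1)) + Aᵀ * riccatiAux A B Q R T k * A -
        Aᵀ * riccatiAux A B Q R T k * B *
          (Bᵀ * riccatiAux A B Q R T k * B + R (T - (k + 1)))⁻¹ *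
            Bᵀ * riccatiAux A B Q R T k * A

/-- The optimal (backward) Riccati solution `P*_t` on horizon `T`. -/
def riccatiP {d p : ℕ} (A : Matrix (Fin d) (Fin d) ℝ) (B : Matrix (Fin d) (Fin p) ℝ)
    (Q : ℕ → Matrix (Fin d) (Fin d) ℝ) (R : ℕ → Matrix (Fin p) (Fin p) ℝ) (T t : ℕ) :
    Matrix (Fin d) (Fin d) ℝ :=
  riccatiAux A B Q R T (T - t)

/-- The optimal feedback gains `K*_t = (Bᵀ P*_{t+1} B + R_t)⁻¹ Bᵀ P*_{t+1} A`. -/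
def Kopt {d p : ℕ} (A : Matrix (Fin d) (Fin d) ℝ) (B : Matrix (Fin d) (Fin p) ℝ)
    (Q : ℕ → Matrix (Fin d) (Fin d) ℝ) (R : ℕ → Matrix (Fin p) (Fin p) ℝ) (T t : ℕ) :
    Matrix (Fin p) (Fin d) ℝ :=
  (Bᵀ * riccatiP A B Q R T (t + 1) * B + R t)⁻¹ * Bᵀ * riccatiP A B Q R T (t + 1) * A

/-- Auxiliary backward policy-Riccati recursion, `policyPAux k = P^K_{T-k}`. -/
def policyPAux {d p : ℕ} (A : Matrix (Fin d) (Fin d) ℝ) (B : Matrix (Fin d) (Fin p) ℝ)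
    (Q : ℕ → Matrix (Fin d) (Fin d) ℝ) (R : ℕ → Matrix (Fin p) (Fin p) ℝ)
    (K : ℕ → Matrix (Fin p) (Fin d) ℝ) (T : ℕ) : ℕ → Matrix (Fin d) (Fin d) ℝ
  | 0 => Q T
  | k + 1 =>
      Q (T - (k + 1)) + (K (T - (k + 1)))ᵀ * R (T - (k + 1)) * K (T - (k + 1)) +
        (A - B * K (T - (k + 1)))ᵀ * policyPAux A B Q R K T k * (A - B * K (T - (k + 1)))

/-- The policy Riccati solution `P^K_t` on horizon `T`. -/
def policyP {d p : ℕ} (A : Matrix (Fin d) (Fin d) ℝ) (B : Matrix (Fin d) (Fin p) ℝ)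
    (Q : ℕ → Matrix (Fin d) (Fin d) ℝ) (R : ℕ → Matrix (Fin p) (Fin p) ℝ)
    (K : ℕ → Matrix (Fin p) (Fin d) ℝ) (T t : ℕ) : Matrix (Fin d) (Fin d) ℝ :=
  policyPAux A B Q R K T (T - t)

/-- The second-moment matrix `E[x xᵀ]` of a random vector `x`. -/
def secondMoment {Ω : Type*} [MeasurableSpace Ω] (μ : Measure Ω) {ι : Type*}
    (x : Ω → ι → ℝ) : Matrix ι ι ℝ :=
  Matrix.of fun i j => ∫ a, x a i * x a j ∂μ

/-- `ν` is the centered (multivariate) Gaussian law on `ι → ℝ` with covariance matrix `C`: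
every linear functional pushes `ν` forward to the corresponding real Gaussian. -/
def IsCenteredGaussian {ι : Type*} [Fintype ι] (ν : Measure (ι → ℝ)) (C : Matrix ι ι ℝ) :
    Prop :=
  IsProbabilityMeasure ν ∧
    ∀ l : ι → ℝ, ν.map (fun x => ∑ i, l i * x i)
      = gaussianReal 0 (Real.toNNReal (l ⬝ᵥ C.mulVec l))

/-- Convergence in distribution (weak convergence of the pushforward laws). -/
def TendstoInDistribution {Ω E : Type*} [MeasurableSpace Ω] [MeasurableSpace E]
    [TopologicalSpace E] (μ : Measure Ω) (Z : ℕ → Ω → E) (ν : Measure E) : Prop :=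
  ∀ f : BoundedContinuousFunction E ℝ,
    Tendsto (fun n => ∫ a, f (Z n a) ∂μ) atTop (𝓝 (∫ x, f x ∂ν))

/-- The noise sequence `ω` is i.i.d., mean zero, square integrable, and the family
`(x0, ω_0, ω_1, …)` is jointly independent; `x0` has finite second moment. -/
def IIDZeroMeanNoise {Ω : Type*} [MeasurableSpace Ω] (μ : Measure Ω) {d : ℕ}
    (x0 : Ω → Fin d → ℝ) (ω : ℕ → Ω → Fin d → ℝ) : Prop :=
  Measurable x0 ∧ (∀ t, Measurable (ω t)) ∧
    iIndepFun (fun i : Option ℕ => i.elim x0 ω) μ ∧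
    (∀ s t, IdentDistrib (ω s) (ω t) μ μ) ∧
    (∀ t, MemLp (ω t) 2 μ) ∧ (∀ t, ∫ a, ω t a ∂μ = 0) ∧ MemLp x0 2 μ

/-- Stabilizability: some gain `K` makes the spectral radius of `A + BK` (over `ℂ`)
strictly smaller than one. -/
def Stabilizable {d p : ℕ} (A : Matrix (Fin d) (Fin d) ℝ) (B : Matrix (Fin d) (Fin p) ℝ) :
    Prop :=
  ∃ K : Matrix (Fin p) (Fin d) ℝ,
    ∀ z ∈ spectrum ℂ ((A + B * K).map (Complex.ofReal)), ‖z‖ < 1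

/-- i.i.d. positive bootstrap weights with mean one and variance one. -/
def IIDBootstrapWeights {Ω : Type*} [MeasurableSpace Ω] (μ : Measure Ω) (W : ℕ → Ω → ℝ) :
    Prop :=
  (∀ ℓ, Measurable (W ℓ)) ∧ iIndepFun W μ ∧
    (∀ ℓ k, IdentDistrib (W ℓ) (W k) μ μ) ∧ (∀ ℓ, ∀ᵐ a ∂μ, 0 < W ℓ a) ∧
    (∀ ℓ, MemLp (W ℓ) 2 μ) ∧ (∀ ℓ, ∫ a, W ℓ a ∂μ = 1) ∧
    (∀ ℓ, ∫ a, (W ℓ a - 1) ^ 2 ∂μ = 1)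

/-- The uniform probability measure on `[-r, r] ⊆ ℝ`. -/
def unifIcc (r : ℝ) : Measure ℝ :=
  (volume (Set.Icc (-r) r))⁻¹ • volume.restrict (Set.Icc (-r) r)

/-- The entries of the random `p × d` matrix `U` are i.i.d. uniform on `[-r, r]`. -/
def IIDUniformEntries {Ω : Type*} [MeasurableSpace Ω] (μ : Measure Ω) {p d : ℕ} (r : ℝ)
    (U : Ω → Matrix (Fin p) (Fin d) ℝ) : Prop :=
  Measurable U ∧
    iIndepFun (fun e : Fin p × Fin d => fun a => U a e.1 e.2) μ ∧
    ∀ e : Fin p × Fin d, μ.map (fun a => U a e.1 e.2) = unifIcc r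

namespace Matrix

variable {m n k α : Type*} [Fintype m] [Fintype n]

/-- Completing the square: the normal equation `hK` cancels the cross terms. -/
theorem riccati_complete_square [CommRing α] (A : Matrix n k α) (B : Matrix n m α)
    (P : Matrix n n α) (R : Matrix m m α) (K : Matrix m k α)
    (hK : (Bᵀ * P * B + R) * K = Bᵀ * P * A) :
    Kᵀ * R * K + (A - B * K)ᵀ * P * (A - B * K) = Aᵀ * P * A - Aᵀ * P * B * K :=
  calc Kᵀ * R * K + (A - B * K)ᵀ * P * (A - B * K)
      = Aᵀ * P * A - Aᵀ * P * B * K - Kᵀ * (Bᵀ * P * A) + Kᵀ * ((Bᵀ * P * B + R) * K) := by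
        simp only [transpose_sub, transpose_mul, Matrix.sub_mul, Matrix.mul_sub, Matrix.add_mul,
          Matrix.mul_add, Matrix.mul_assoc]
        abel
    _ = Aᵀ * P * A - Aᵀ * P * B * K := by rw [hK]; abel

variable {Q P : Matrix n n ℝ} {R : Matrix m m ℝ}

theorem PosSemidef.transpose_mul_mul_same [Fintype k] (hP : P.PosSemidef) (M : Matrix n k ℝ) :
    (Mᵀ * P * M).PosSemidef := by
  simpa using hP.conjTranspose_mul_mul_same M

theorem PosDef.transpose_mul_mul_add (hR : R.PosDef) (hP : P.PosSemidef) (B : Matrix n m ℝ) :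
    (Bᵀ * P * B + R).PosDef :=
  PosDef.posSemidef_add (hP.transpose_mul_mul_same B) hR

/-- The update equals `Q + KᵀRK + (A - BK)ᵀP(A - BK)` for the optimal gain
`K = (BᵀPB + R)⁻¹BᵀPA`, a sum of a positive definite and two positive semidefinite terms. -/
theorem PosDef.riccati_update [DecidableEq m] [DecidableEq n]
    (A : Matrix n n ℝ) (B : Matrix n m ℝ) (hQ : Q.PosDef) (hR : R.PosDef) (hP : P.PosSemidef) :
    (Q + Aᵀ * P * A - Aᵀ * P * B * (Bᵀ * P * B + R)⁻¹ * Bᵀ * P * A).PosDef := by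
  set S := Bᵀ * P * B + R
  have hS : IsUnit S.det := (hR.transpose_mul_mul_add hP B).isUnit.map detMonoidHom
  set K := S⁻¹ * (Bᵀ * P * A)
  have hK : S * K = Bᵀ * P * A := mul_nonsing_inv_cancel_left _ _ hS
  have hupdate : Q + Aᵀ * P * A - Aᵀ * P * B * S⁻¹ * Bᵀ * P * A
      = Q + (Kᵀ * R * K + (A - B * K)ᵀ * P * (A - B * K)) := by
    rw [riccati_complete_square A B P R K hK]; simp only [K, Matrix.mul_assoc]; abel
  rw [hupdate]
  exact hQ.add_posSemidef
    ((hR.posSemidef.transpose_mul_mul_same K).add (hP.transpose_mul_mul_same _))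

end Matrix

/-- The backward discrete algebraic Riccati recursion started from a
symmetric positive definite terminal condition, with symmetric positive definite cost
matrices, is well posed: at every step the matrix `Bᵀ P*_{t+1} B + R_t` is invertible,
and every `P*_t` (for `t = 0, …, T`) is symmetric positive definite. -/
theorem riccati_recursion_posDef
    {d p T : ℕ}
    (A : Matrix (Fin d) (Fin d) ℝ) (B : Matrix (Fin d) (Fin p) ℝ)
    (Q : ℕ → Matrix (Fin d) (Fin d) ℝ) (R : ℕ → Matrix (Fin p) (Fin p) ℝ)
    (hQ : ∀ t ≤ T, (Q t).PosDef) (hR : ∀ t < T, (R t).PosDef)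
    (P : ℕ → Matrix (Fin d) (Fin d) ℝ)
    (hPT : P T = Q T)
    (hPrec : ∀ t < T, P t =
      Q t + Aᵀ * P (t + 1) * A -
        Aᵀ * P (t + 1) * B * (Bᵀ * P (t + 1) * B + R t)⁻¹ * Bᵀ * P (t + 1) * A) :
    (∀ t < T, IsUnit (Bᵀ * P (t + 1) * B + R t)) ∧ (∀ t ≤ T, (P t).PosDef) := by
  have hP : ∀ t ≤ T, (P t).PosDef := fun t ht ↦ by
    induction ht using Nat.decreasingInduction with
    | self => exact hPT ▸ hQ T le_rfl
    | of_succ t ht hP =>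
      rw [hPrec t ht]
      exact (hQ t ht.le).riccati_update A B (hR t ht) hP.posSemidef
  exact ⟨fun t ht ↦ ((hR t ht).transpose_mul_mul_add (hP (t + 1) ht).posSemidef B).isUnit,
    hP⟩

end
end

section
/- (Exact policy gradient.) For every t = 0,…,T−1, the gradient of the cost C(K) with respect to the block K_t (the other blocks held fixed) is ∇_{K_t} C(K) = 2 E_t(K_t) Σ_t, where E_t(K_t) = (R_t + Bᵀ P^K_{t+1} B) K_t − Bᵀ P^K_{t+1} A and Σ_t = E[x_t x_tᵀ] is the state second-moment matrix under policy K; equivalently, the Fréchet derivative of C in the direction H ∈ ℝ^{p×d} (applied to K_t) equals 2 trace(Hᵀ E_t(K_t) Σ_t). -/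
/-!
Completing the square along the closed-loop trajectory: with `P_s = P^K_s` and
`x_{s+1} = (A - B K_s) x_s + ω_s`, each stage cost equals
`x_sᵀ P_s x_s - x_{s+1}ᵀ P_{s+1} x_{s+1}` plus terms `ω_sᵀ N x_s` and `ω_sᵀ P_{s+1} ω_s`.
Since `x_s` is a function of `x_0, ω_0, …, ω_{s-1}`, it is independent of the mean-zero `ω_s`,
so the terms `ω_sᵀ N x_s` have zero expectation and the expected cost from stage `t` on is
`tr(P_t Σ_t)` plus a constant coming from the noise. Replacing `K_t` by `M` leaves `Σ_t`,
`P_{t+1}, …, P_T` and the earlier stage costs unchanged and turns `P_t` into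
`Q_t + Mᵀ R_t M + (A - B M)ᵀ P_{t+1} (A - B M)`, so `C` is a quadratic function of `M`;
differentiating it, with `R_t`, `P_{t+1}` and `Σ_t` symmetric, gives `2 E_t(K_t) Σ_t`.
-/

open MeasureTheory ProbabilityTheory Matrix Filter Finset
open scoped Kronecker ENNReal NNReal Topology

noncomputable section

attribute [local instance] Matrix.normedAddCommGroup Matrix.normedSpace

section Algebra

variable {d p : ℕ}

theorem dotProduct_mulVec_bellman_step (Q : Matrix (Fin d) (Fin d) ℝ)
    (R : Matrix (Fin p) (Fin p) ℝ) (K : Matrix (Fin p) (Fin d) ℝ) (F P : Matrix (Fin d) (Fin d) ℝ)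
    (x w : Fin d → ℝ) :
    x ⬝ᵥ Q *ᵥ x + K *ᵥ x ⬝ᵥ R *ᵥ (K *ᵥ x) =
      x ⬝ᵥ (Q + Kᵀ * R * K + Fᵀ * P * F) *ᵥ x - (F *ᵥ x + w) ⬝ᵥ P *ᵥ (F *ᵥ x + w)
        + w ⬝ᵥ ((P + Pᵀ) * F) *ᵥ x + w ⬝ᵥ P *ᵥ w := by
  have hswap : w ⬝ᵥ (Pᵀ * F) *ᵥ x = F *ᵥ x ⬝ᵥ P *ᵥ w := by
    rw [← mulVec_mulVec, dotProduct_mulVec, vecMul_transpose, dotProduct_comm]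
  have hK : x ⬝ᵥ (Kᵀ * R * K) *ᵥ x = K *ᵥ x ⬝ᵥ R *ᵥ (K *ᵥ x) := by
    rw [Matrix.mul_assoc, ← mulVec_mulVec, dotProduct_mulVec, vecMul_transpose, mulVec_mulVec]
  have hF : x ⬝ᵥ (Fᵀ * P * F) *ᵥ x = F *ᵥ x ⬝ᵥ P *ᵥ (F *ᵥ x) := by
    rw [Matrix.mul_assoc, ← mulVec_mulVec, dotProduct_mulVec, vecMul_transpose, mulVec_mulVec]
  simp only [add_mulVec, Matrix.add_mul, dotProduct_add, add_dotProduct, mulVec_add, hswap,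
    hK, hF]
  rw [← mulVec_mulVec]
  ring

variable (A : Matrix (Fin d) (Fin d) ℝ) (B : Matrix (Fin d) (Fin p) ℝ)
  (Q : ℕ → Matrix (Fin d) (Fin d) ℝ) (R : ℕ → Matrix (Fin p) (Fin p) ℝ) (T : ℕ)

theorem policyP_self (K : ℕ → Matrix (Fin p) (Fin d) ℝ) : policyP A B Q R K T T = Q T := by
  simp [policyP, policyPAux]

theorem policyP_of_lt (K : ℕ → Matrix (Fin p) (Fin d) ℝ) {t : ℕ} (ht : t < T) :
    policyP A B Q R K T t = Q t + (K t)ᵀ * R t * K t +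
      (A - B * K t)ᵀ * policyP A B Q R K T (t + 1) * (A - B * K t) := by
  have h : T - t = T - (t + 1) + 1 := by omega
  rw [policyP, h, policyPAux, show T - (T - (t + 1) + 1) = t by omega]
  rfl

theorem policyP_congr {K K' : ℕ → Matrix (Fin p) (Fin d) ℝ} {n : ℕ} (hn : n ≤ T)
    (h : ∀ s, n ≤ s → K s = K' s) : policyP A B Q R K T n = policyP A B Q R K' T n := by
  induction hn using Nat.decreasingInduction with
  | self => rw [policyP_self, policyP_self]
  | of_succ k hk ih =>
    rw [policyP_of_lt A B Q R T K hk, policyP_of_lt A B Q R T K' hk, h k le_rfl,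
      ih fun s hs => h s (by omega)]

theorem policyP_transpose (K : ℕ → Matrix (Fin p) (Fin d) ℝ) {n : ℕ} (hn : n ≤ T)
    (hQ : ∀ s, n ≤ s → s ≤ T → (Q s)ᵀ = Q s) (hR : ∀ s, n ≤ s → s < T → (R s)ᵀ = R s) :
    (policyP A B Q R K T n)ᵀ = policyP A B Q R K T n := by
  induction hn using Nat.decreasingInduction with
  | self => rw [policyP_self, hQ T le_rfl le_rfl]
  | of_succ k hk ih =>
    rw [policyP_of_lt A B Q R T K hk]
    simp only [transpose_add, transpose_mul, transpose_transpose, Matrix.mul_assoc,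
      hQ k le_rfl hk.le, hR k le_rfl hk,
      ih (fun s hs => hQ s (by omega)) (fun s hs => hR s (by omega))]

theorem traj_congr_policy {K K' : ℕ → Matrix (Fin p) (Fin d) ℝ} (x0 : Fin d → ℝ)
    (ω : ℕ → Fin d → ℝ) {n : ℕ} (h : ∀ s < n, K s = K' s) :
    traj A B K x0 ω n = traj A B K' x0 ω n := by
  induction n with
  | zero => rfl
  | succ n ih => rw [traj, traj, h n n.lt_succ_self, ih fun s hs => h s (by omega)]

theorem traj_congr_noise (K : ℕ → Matrix (Fin p) (Fin d) ℝ) (x0 : Fin d → ℝ)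
    {ω ω' : ℕ → Fin d → ℝ} {n : ℕ} (h : ∀ s < n, ω s = ω' s) :
    traj A B K x0 ω n = traj A B K x0 ω' n := by
  induction n with
  | zero => rfl
  | succ n ih => rw [traj, traj, h n n.lt_succ_self, ih fun s hs => h s (by omega)]

def stageCost (K : ℕ → Matrix (Fin p) (Fin d) ℝ) (s : ℕ) (x : Fin d → ℝ) : ℝ :=
  x ⬝ᵥ Q s *ᵥ x + K s *ᵥ x ⬝ᵥ R s *ᵥ (K s *ᵥ x)

theorem trajCost_eq_add_stageCost_sum (K : ℕ → Matrix (Fin p) (Fin d) ℝ) (x0 : Fin d → ℝ)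
    (ω : ℕ → Fin d → ℝ) {t : ℕ} (ht : t ≤ T) :
    trajCost T A B Q R K x0 ω =
      (∑ s ∈ range t, stageCost Q R K s (traj A B K x0 ω s))
        + traj A B K x0 ω t ⬝ᵥ policyP A B Q R K T t *ᵥ traj A B K x0 ω t
        + ∑ s ∈ Ico t T,
            (ω s ⬝ᵥ ((policyP A B Q R K T (s + 1) + (policyP A B Q R K T (s + 1))ᵀ)
                * (A - B * K s)) *ᵥ traj A B K x0 ω s
              + ω s ⬝ᵥ policyP A B Q R K T (s + 1) *ᵥ ω s) := by
  set x := traj A B K x0 ω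
  set V : ℕ → ℝ := fun s => x s ⬝ᵥ policyP A B Q R K T s *ᵥ x s
  have hstep : ∀ s ∈ Ico t T, stageCost Q R K s (x s) =
      (V s - V (s + 1)) + (ω s ⬝ᵥ ((policyP A B Q R K T (s + 1)
        + (policyP A B Q R K T (s + 1))ᵀ) * (A - B * K s)) *ᵥ x s
          + ω s ⬝ᵥ policyP A B Q R K T (s + 1) *ᵥ ω s) := by
    intro s hs
    have hxs : x (s + 1) = (A - B * K s) *ᵥ x s + ω s := rfl
    simp only [V, hxs, policyP_of_lt A B Q R T K (mem_Ico.1 hs).2, stageCost]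
    rw [dotProduct_mulVec_bellman_step _ _ _ (A - B * K s)
      (policyP A B Q R K T (s + 1)) _ (ω s)]
    ring
  have htelescope : ∑ s ∈ Ico t T, (V s - V (s + 1)) = V t - V T := by
    rw [← neg_sub, ← sum_Ico_sub V ht, ← sum_neg_distrib]
    simp only [neg_sub]
  change ∑ s ∈ range T, stageCost Q R K s (x s) + x T ⬝ᵥ Q T *ᵥ x T = _
  rw [← sum_range_add_sum_Ico _ ht, sum_congr rfl hstep, sum_add_distrib, htelescope]
  simp only [V, policyP_self]
  ring

end Algebra

theorem secondMoment_transpose {Ω ι : Type*} [MeasurableSpace Ω] (μ : Measure Ω)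
    (f : Ω → ι → ℝ) : (secondMoment μ f)ᵀ = secondMoment μ f := by
  ext i j
  simp only [transpose_apply, secondMoment, of_apply, mul_comm]

section Moments

variable {Ω : Type*} [MeasurableSpace Ω] {μ : Measure Ω} {ι κ : Type*} [Fintype ι] [Fintype κ]

theorem MeasureTheory.MemLp.mulVec {f : Ω → κ → ℝ} (hf : MemLp f 2 μ) (N : Matrix ι κ ℝ) :
    MemLp (fun a => N *ᵥ f a) 2 μ :=
  (LinearMap.toContinuousLinearMap (Matrix.mulVecLin N)).comp_memLp' hf

theorem dotProduct_mulVec_eq_sum (N : Matrix ι κ ℝ) (u : ι → ℝ) (v : κ → ℝ) :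
    u ⬝ᵥ N *ᵥ v = ∑ i, ∑ j, N i j * (u i * v j) := by
  simp only [dotProduct, mulVec, mul_sum]
  exact sum_congr rfl fun i _ => sum_congr rfl fun j _ => by ring

theorem integrable_dotProduct_mulVec {u : Ω → ι → ℝ} {v : Ω → κ → ℝ} (hu : MemLp u 2 μ)
    (hv : MemLp v 2 μ) (N : Matrix ι κ ℝ) : Integrable (fun a => u a ⬝ᵥ N *ᵥ v a) μ := by
  simp only [dotProduct_mulVec_eq_sum]
  exact integrable_finsetSum _ fun i _ => integrable_finsetSum _ fun j _ =>
    ((hu.eval i).integrable_mul (hv.eval j)).const_mul _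

theorem integral_dotProduct_mulVec {u : Ω → ι → ℝ} {v : Ω → κ → ℝ} (hu : MemLp u 2 μ)
    (hv : MemLp v 2 μ) (N : Matrix ι κ ℝ) :
    ∫ a, u a ⬝ᵥ N *ᵥ v a ∂μ = ∑ i, ∑ j, N i j * ∫ a, u a i * v a j ∂μ := by
  have hint : ∀ i j, Integrable (fun a => u a i * v a j) μ := fun i j =>
    (hu.eval i).integrable_mul (hv.eval j)
  simp only [dotProduct_mulVec_eq_sum]
  refine (integral_finsetSum _ fun i _ =>
    integrable_finsetSum _ fun j _ => (hint i j).const_mul _).trans (sum_congr rfl fun i _ => ?_)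
  refine (integral_finsetSum _ fun j _ => (hint i j).const_mul _).trans
    (sum_congr rfl fun j _ => ?_)
  exact integral_const_mul _ _

theorem integral_dotProduct_mulVec_self {f : Ω → ι → ℝ} (hf : MemLp f 2 μ) (N : Matrix ι ι ℝ) :
    ∫ a, f a ⬝ᵥ N *ᵥ f a ∂μ = (N * secondMoment μ f).trace := by
  rw [integral_dotProduct_mulVec hf hf]
  simp only [trace, Matrix.diag, mul_apply, secondMoment, of_apply]
  refine sum_congr rfl fun i _ => sum_congr rfl fun j _ => ?_
  simp only [mul_comm (f _ i)]

end Moments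

theorem measurable_traj {α : Type*} [MeasurableSpace α] {d p : ℕ} (A : Matrix (Fin d) (Fin d) ℝ)
    (B : Matrix (Fin d) (Fin p) ℝ) (K : ℕ → Matrix (Fin p) (Fin d) ℝ) {x0 : α → Fin d → ℝ}
    {ω : ℕ → α → Fin d → ℝ} (hx0 : Measurable x0) (hω : ∀ s, Measurable (ω s)) (n : ℕ) :
    Measurable fun a => traj A B K (x0 a) (fun s => ω s a) n := by
  induction n with
  | zero => exact hx0
  | succ n ih =>
    exact ((LinearMap.toContinuousLinearMap (mulVecLin (A - B * K n))).measurable.comp ih).add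
      (hω n)

namespace IIDZeroMeanNoise

variable {Ω : Type*} [MeasurableSpace Ω] {μ : Measure Ω} {d p : ℕ} {x0 : Ω → Fin d → ℝ}
  {ω : ℕ → Ω → Fin d → ℝ} (A : Matrix (Fin d) (Fin d) ℝ) (B : Matrix (Fin d) (Fin p) ℝ)
  (K : ℕ → Matrix (Fin p) (Fin d) ℝ)

theorem isProbabilityMeasure (hnoise : IIDZeroMeanNoise μ x0 ω) : IsProbabilityMeasure μ :=
  let ⟨_, _, hind, _⟩ := hnoise
  hind.isProbabilityMeasure

theorem memLp_traj (hnoise : IIDZeroMeanNoise μ x0 ω) (n : ℕ) :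
    MemLp (fun a => traj A B K (x0 a) (fun s => ω s a) n) 2 μ := by
  obtain ⟨-, -, -, -, hω, -, hx0⟩ := hnoise
  induction n with
  | zero => exact hx0
  | succ n ih =>
    change MemLp (fun a => (A - B * K n) *ᵥ traj A B K (x0 a) (fun s => ω s a) n + ω n a) 2 μ
    exact (ih.mulVec (A - B * K n)).add (hω n)

theorem indepFun_traj (hnoise : IIDZeroMeanNoise μ x0 ω) (n : ℕ) :
    IndepFun (fun a => traj A B K (x0 a) (fun s => ω s a) n) (ω n) μ := by
  obtain ⟨hx0, hω, hind, -⟩ := hnoise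
  set S : Finset (Option ℕ) := insert none ((range n).image some)
  have hdisj : Disjoint S {some n} := by simp [S]
  have hmeas : ∀ o : Option ℕ, Measurable (o.elim x0 ω) := by
    rintro (_ | s)
    exacts [hx0, hω s]
  have hnone : none ∈ S := mem_insert_self _ _
  have hsome : ∀ s < n, some s ∈ S := fun s hs =>
    mem_insert_of_mem (mem_image_of_mem _ (mem_range.2 hs))
  -- `S` indexes `x_0, ω_0, …, ω_{n-1}`, from which `φ` recomputes `x_n`
  let φ : (S → Fin d → ℝ) → Fin d → ℝ := fun g =>
    traj A B K (g ⟨none, hnone⟩) (fun s => if h : s < n then g ⟨some s, hsome s h⟩ else 0) n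
  have hφ : Measurable φ := by
    refine measurable_traj A B K (measurable_pi_apply _) (fun s => ?_) n
    by_cases h : s < n
    · simpa only [dif_pos h] using measurable_pi_apply _
    · simpa only [dif_neg h] using measurable_const
  have hφx : (fun a => traj A B K (x0 a) (fun s => ω s a) n) =
      φ ∘ fun a (o : S) => (o : Option ℕ).elim x0 ω a := by
    funext a
    exact traj_congr_noise A B K _ fun s hs => by simp [hs]
  rw [hφx]
  exact (hind.indepFun_finset S {some n} hdisj hmeas).comp hφ
    (measurable_pi_apply ⟨some n, mem_singleton_self _⟩)

theorem integral_noise_dotProduct_mulVec_traj (hnoise : IIDZeroMeanNoise μ x0 ω) (n : ℕ)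
    (N : Matrix (Fin d) (Fin d) ℝ) :
    ∫ a, ω n a ⬝ᵥ N *ᵥ traj A B K (x0 a) (fun s => ω s a) n ∂μ = 0 := by
  have := hnoise.isProbabilityMeasure
  have ⟨_, _, _, _, hω, hω_mean, _⟩ := hnoise
  have hωn := hω n
  have hmean : ∀ i, ∫ a, ω n a i ∂μ = 0 := fun i => by
    rw [← eval_integral (hωn.integrable one_le_two).eval, hω_mean n, Pi.zero_apply]
  rw [integral_dotProduct_mulVec hωn (hnoise.memLp_traj A B K n)]
  refine sum_eq_zero fun i _ => sum_eq_zero fun j _ => ?_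
  have hij := ((hnoise.indepFun_traj A B K n).comp (measurable_pi_apply j)
    (measurable_pi_apply i)).symm.integral_mul_eq_mul_integral
    (hωn.eval i).aestronglyMeasurable ((hnoise.memLp_traj A B K n).eval j).aestronglyMeasurable
  exact mul_eq_zero_of_right _ (hij.trans (mul_eq_zero_of_left (hmean i) _))

theorem expCost_eq (hnoise : IIDZeroMeanNoise μ x0 ω) (Q : ℕ → Matrix (Fin d) (Fin d) ℝ)
    (R : ℕ → Matrix (Fin p) (Fin p) ℝ) {t T : ℕ} (ht : t ≤ T) :
    expCost μ T A B Q R x0 ω K =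
      ∫ a, ∑ s ∈ range t, stageCost Q R K s (traj A B K (x0 a) (fun s => ω s a) s) ∂μ
        + (policyP A B Q R K T t *
            secondMoment μ (fun a => traj A B K (x0 a) (fun s => ω s a) t)).trace
        + ∑ s ∈ Ico t T, (policyP A B Q R K T (s + 1) * secondMoment μ (ω s)).trace := by
  have hX := hnoise.memLp_traj A B K
  have ⟨_, _, _, _, hω, _⟩ := hnoise
  have hstage : ∀ s, Integrable
      (fun a => stageCost Q R K s (traj A B K (x0 a) (fun s => ω s a) s)) μ := fun s =>
    (integrable_dotProduct_mulVec (hX s) (hX s) _).add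
      (integrable_dotProduct_mulVec ((hX s).mulVec _) ((hX s).mulVec _) _)
  have hcross : ∀ s (N : Matrix (Fin d) (Fin d) ℝ), Integrable
      (fun a => ω s a ⬝ᵥ N *ᵥ traj A B K (x0 a) (fun s => ω s a) s) μ := fun s N =>
    integrable_dotProduct_mulVec (hω s) (hX s) N
  have hquad : ∀ s (N : Matrix (Fin d) (Fin d) ℝ), Integrable
      (fun a => ω s a ⬝ᵥ N *ᵥ ω s a) μ := fun s N =>
    integrable_dotProduct_mulVec (hω s) (hω s) N
  simp only [expCost, trajCost_eq_add_stageCost_sum A B Q R T K _ _ ht]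
  rw [integral_add ((integrable_finsetSum _ fun s _ => hstage s).fun_add
      (integrable_dotProduct_mulVec (hX t) (hX t) _))
      (integrable_finsetSum _ fun s _ => (hcross s _).fun_add (hquad s _)),
    integral_add (integrable_finsetSum _ fun s _ => hstage s)
      (integrable_dotProduct_mulVec (hX t) (hX t) _),
    integral_dotProduct_mulVec_self (hX t),
    integral_finsetSum _ fun s _ => (hcross s _).fun_add (hquad s _)]
  congr 1
  refine sum_congr rfl fun s _ => ?_
  rw [integral_add (hcross s _) (hquad s _), hnoise.integral_noise_dotProduct_mulVec_traj,
    integral_dotProduct_mulVec_self (hω s), zero_add]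

theorem expCost_update_eq (hnoise : IIDZeroMeanNoise μ x0 ω) (Q : ℕ → Matrix (Fin d) (Fin d) ℝ)
    (R : ℕ → Matrix (Fin p) (Fin p) ℝ) {t T : ℕ} (ht : t < T) :
    ∃ c : ℝ, ∀ M : Matrix (Fin p) (Fin d) ℝ,
      expCost μ T A B Q R x0 ω (Function.update K t M) = c +
        ((Q t + Mᵀ * R t * M + (A - B * M)ᵀ * policyP A B Q R K T (t + 1) * (A - B * M)) *
          secondMoment μ (fun a => traj A B K (x0 a) (fun s => ω s a) t)).trace := by
  refine ⟨∫ a, ∑ s ∈ range t, stageCost Q R K s (traj A B K (x0 a) (fun s => ω s a) s) ∂μ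
    + ∑ s ∈ Ico t T, (policyP A B Q R K T (s + 1) * secondMoment μ (ω s)).trace, fun M => ?_⟩
  set K' := Function.update K t M
  have hKt : K' t = M := Function.update_self t M K
  have hK' : ∀ s ≠ t, K' s = K s := fun s hs => Function.update_of_ne hs M K
  have hx : ∀ s ≤ t, ∀ a, traj A B K' (x0 a) (fun s => ω s a) s =
      traj A B K (x0 a) (fun s => ω s a) s := fun s hs a =>
    traj_congr_policy A B _ _ fun r hr => hK' r (by omega)
  have hP : ∀ n, t < n → n ≤ T → policyP A B Q R K' T n = policyP A B Q R K T n :=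
    fun n htn hnT => policyP_congr A B Q R T hnT fun s hs => hK' s (by omega)
  have hstage : ∀ s ∈ range t, ∀ a,
      stageCost Q R K' s (traj A B K' (x0 a) (fun s => ω s a) s) =
        stageCost Q R K s (traj A B K (x0 a) (fun s => ω s a) s) := fun s hs a => by
    rw [stageCost, stageCost, hK' s (mem_range.1 hs).ne, hx s (mem_range.1 hs).le]
  rw [hnoise.expCost_eq A B K' Q R ht.le, policyP_of_lt A B Q R T K' ht, hKt,
    hP (t + 1) t.lt_succ_self ht, funext (hx t le_rfl)]
  simp only [fun a => sum_congr rfl fun s hs => hstage s hs a]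
  rw [sum_congr rfl fun s hs =>
    by rw [hP (s + 1) (Nat.lt_succ_of_le (mem_Ico.1 hs).1) (mem_Ico.1 hs).2]]
  ring

end IIDZeroMeanNoise

section TraceForm

variable {ι κ : Type*} [Fintype ι] [Fintype κ]

def traceForm (C : Matrix κ κ ℝ) (S : Matrix ι ι ℝ) :
    Matrix κ ι ℝ →L[ℝ] Matrix κ ι ℝ →L[ℝ] ℝ :=
  LinearMap.toContinuousLinearMap <| LinearMap.toContinuousLinearMap.toLinearMap ∘ₗ
    LinearMap.mk₂ ℝ (fun X Y => (Xᵀ * C * Y * S).trace)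
      (fun X X' Y => by simp only [transpose_add, Matrix.add_mul, trace_add])
      (fun c X Y => by simp only [transpose_smul, Matrix.smul_mul, trace_smul])
      (fun X Y Y' => by simp only [Matrix.mul_add, Matrix.add_mul, trace_add])
      (fun c X Y => by simp only [Matrix.mul_smul, Matrix.smul_mul, trace_smul])

theorem traceForm_apply (C : Matrix κ κ ℝ) (S : Matrix ι ι ℝ) (X Y : Matrix κ ι ℝ) :
    traceForm C S X Y = (Xᵀ * C * Y * S).trace :=
  rfl

theorem traceForm_comm {C : Matrix κ κ ℝ} {S : Matrix ι ι ℝ} (hC : Cᵀ = C) (hS : Sᵀ = S)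
    (X Y : Matrix κ ι ℝ) : traceForm C S X Y = traceForm C S Y X := by
  rw [traceForm_apply, traceForm_apply, ← trace_transpose]
  simp only [transpose_mul, transpose_transpose, hC, hS, Matrix.mul_assoc]
  rw [trace_mul_comm]
  simp only [Matrix.mul_assoc]

theorem hasFDerivAt_trace_riccatiStep (Q A P : Matrix ι ι ℝ) (R : Matrix κ κ ℝ)
    (B : Matrix ι κ ℝ) (S : Matrix ι ι ℝ) (hR : Rᵀ = R) (hP : Pᵀ = P) (hS : Sᵀ = S)
    (K : Matrix κ ι ℝ) :
    ∃ L : Matrix κ ι ℝ →L[ℝ] ℝ,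
      HasFDerivAt (fun M => ((Q + Mᵀ * R * M + (A - B * M)ᵀ * P * (A - B * M)) * S).trace) L K ∧
      ∀ H, L H = 2 * (Hᵀ * (((R + Bᵀ * P * B) * K - Bᵀ * P * A) * S)).trace := by
  let mulB : Matrix κ ι ℝ →L[ℝ] Matrix ι ι ℝ :=
    LinearMap.toContinuousLinearMap (mulLeftLinearMap ι ℝ B)
  have hclosed : HasFDerivAt (fun M => A - B * M) (-mulB) K := mulB.hasFDerivAt.const_sub A
  have hsplit : (fun M => ((Q + Mᵀ * R * M + (A - B * M)ᵀ * P * (A - B * M)) * S).trace) =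
      fun M => (Q * S).trace + traceForm R S M M + traceForm P S (A - B * M) (A - B * M) := by
    funext M
    simp only [Matrix.add_mul, trace_add, traceForm_apply]
  rw [hsplit]
  refine ⟨_, (((traceForm R S).hasFDerivAt_of_bilinear (hasFDerivAt_id K)
    (hasFDerivAt_id K)).const_add _).add
    ((traceForm P S).hasFDerivAt_of_bilinear hclosed hclosed), fun H => ?_⟩
  change traceForm R S K H + traceForm R S H K +
    (traceForm P S (A - B * K) (-(B * H)) + traceForm P S (-(B * H)) (A - B * K)) = _
  rw [traceForm_comm hR hS K, traceForm_comm hP hS (A - B * K)]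
  simp only [traceForm_apply, transpose_neg, transpose_mul, Matrix.neg_mul,
    Matrix.mul_sub, Matrix.sub_mul, Matrix.add_mul, Matrix.mul_add, trace_add, trace_sub,
    trace_neg, Matrix.mul_assoc]
  ring

end TraceForm

theorem exact_policy_gradient_general
    {Ω : Type*} [MeasurableSpace Ω] (μ : Measure Ω)
    {d p T : ℕ}
    (A : Matrix (Fin d) (Fin d) ℝ) (B : Matrix (Fin d) (Fin p) ℝ)
    (Q : ℕ → Matrix (Fin d) (Fin d) ℝ) (R : ℕ → Matrix (Fin p) (Fin p) ℝ)
    (hQ : ∀ t ≤ T, (Q t).PosDef) (hR : ∀ t < T, (R t).PosDef)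
    (x0 : Ω → Fin d → ℝ) (ω : ℕ → Ω → Fin d → ℝ)
    (hnoise : IIDZeroMeanNoise μ x0 ω)
    (K : ℕ → Matrix (Fin p) (Fin d) ℝ)
    (t : ℕ) (ht : t < T) :
    ∃ L : Matrix (Fin p) (Fin d) ℝ →L[ℝ] ℝ,
      HasFDerivAt (fun M => expCost μ T A B Q R x0 ω (Function.update K t M)) L (K t) ∧
      ∀ H : Matrix (Fin p) (Fin d) ℝ,
        L H = 2 * (Hᵀ *
          (((R t + Bᵀ * policyP A B Q R K T (t + 1) * B) * K t -
              Bᵀ * policyP A B Q R K T (t + 1) * A) *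
            secondMoment μ (fun a => traj A B K (x0 a) (fun s => ω s a) t))).trace := by
  have hQsymm : ∀ s ≤ T, (Q s)ᵀ = Q s := fun s hs => (isHermitian_iff_isSymm.1 (hQ s hs).1).eq
  have hRsymm : ∀ s < T, (R s)ᵀ = R s := fun s hs => (isHermitian_iff_isSymm.1 (hR s hs).1).eq
  have hPsymm := policyP_transpose A B Q R T K ht (fun s _ hs => hQsymm s hs)
    (fun s _ hs => hRsymm s hs)
  obtain ⟨c, hc⟩ := hnoise.expCost_update_eq A B K Q R ht
  obtain ⟨L, hL, hLapply⟩ := hasFDerivAt_trace_riccatiStep (Q t) A _ (R t) B _ (hRsymm t ht)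
    hPsymm (secondMoment_transpose μ _) (K t)
  exact ⟨L, funext hc ▸ hL.const_add c, hLapply⟩

/-- Exact policy gradient. The Fréchet derivative of the cost `C(K)`
with respect to the stage-`t` block `K_t` (other blocks held fixed) is the linear map
`H ↦ 2 trace(Hᵀ E_t(K_t) Σ_t)`, where `E_t(K_t) = (R_t + Bᵀ P^K_{t+1} B) K_t - Bᵀ P^K_{t+1} A`
and `Σ_t = E[x_t x_tᵀ]` is the state second-moment matrix under policy `K`; that is,
`∇_{K_t} C(K) = 2 E_t(K_t) Σ_t`. -/
theorem exact_policy_gradient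
    {Ω : Type*} [MeasurableSpace Ω] (μ : Measure Ω) [IsProbabilityMeasure μ]
    {d p T : ℕ} (hT : 1 ≤ T)
    (A : Matrix (Fin d) (Fin d) ℝ) (B : Matrix (Fin d) (Fin p) ℝ)
    (Q : ℕ → Matrix (Fin d) (Fin d) ℝ) (R : ℕ → Matrix (Fin p) (Fin p) ℝ)
    (hQ : ∀ t ≤ T, (Q t).PosDef) (hR : ∀ t < T, (R t).PosDef)
    (x0 : Ω → Fin d → ℝ) (ω : ℕ → Ω → Fin d → ℝ)
    (hnoise : IIDZeroMeanNoise μ x0 ω)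
    (K : ℕ → Matrix (Fin p) (Fin d) ℝ)
    (t : ℕ) (ht : t < T) :
    ∃ L : Matrix (Fin p) (Fin d) ℝ →L[ℝ] ℝ,
      HasFDerivAt (fun M => expCost μ T A B Q R x0 ω (Function.update K t M)) L (K t) ∧
      ∀ H : Matrix (Fin p) (Fin d) ℝ,
        L H = 2 * (Hᵀ *
          (((R t + Bᵀ * policyP A B Q R K T (t + 1) * B) * K t -
              Bᵀ * policyP A B Q R K T (t + 1) * A) *
            secondMoment μ (fun a => traj A B K (x0 a) (fun s => ω s a) t))).trace :=
  exact_policy_gradient_general μ A B Q R hQ hR x0 ω hnoise K t ht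
end
end
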